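/- Let H be a modular hyperplane of a matroid M with complementary cocircuit C* = E(M)−H. Then cl(C*) is a rotunda of M, and every other rotunda of M is contained in H. -/

import Mathlib

open Set

namespace Matroid

variable {α : Type*} {β : Type*}

/-- The rank of a set in a matroid: the supremum of sizes of independent subsets. -/
noncomputable def mRank (M : Matroid α) (X : Set α) : ℕ :=
  sSup {n : ℕ | ∃ I, M.Indep I ∧ I ⊆ X ∧ I.ncard = n}

/-- The rank of a matroid. -/
noncomputable def mRk (M : Matroid α) : ℕ := M.mRank M.E

/-- A flat `F` is modular if `r F + r F' = r (F ∪ F') + r (F ∩ F')` for every flat `F'`. -/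
def IsModularFlat (M : Matroid α) (F : Set α) : Prop :=
  M.IsFlat F ∧ ∀ F', M.IsFlat F' →
    M.mRank F + M.mRank F' = M.mRank (F ∪ F') + M.mRank (F ∩ F')

/-- A proper flat is a flat other than the ground set. -/
def IsProperFlat (M : Matroid α) (F : Set α) : Prop := M.IsFlat F ∧ F ≠ M.E

/-- A vertical cover is a pair of proper flats whose union is the ground set. -/
def VerticalCover (M : Matroid α) (F F' : Set α) : Prop :=
  M.IsProperFlat F ∧ M.IsProperFlat F' ∧ F ∪ F' = M.E

/-- A modular cover is a vertical cover by two modular flats. -/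
def ModularCover (M : Matroid α) (F F' : Set α) : Prop :=
  M.VerticalCover F F' ∧ M.IsModularFlat F ∧ M.IsModularFlat F'

/-- A matroid is round if it has no vertical cover. -/
def Round (M : Matroid α) : Prop := ∀ F F', ¬ M.VerticalCover F F'

/-- A subset of the ground set is round if the restriction to it is round. -/
def RoundSet (M : Matroid α) (X : Set α) : Prop := X ⊆ M.E ∧ (M ↾ X).Round

/-- A rotunda is a maximal round flat. -/
def Rotunda (M : Matroid α) (R : Set α) : Prop :=
  M.IsFlat R ∧ M.RoundSet R ∧ ∀ R', M.IsFlat R' → M.RoundSet R' → R ⊆ R' → R' = R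

/-- A matroid of rank `r` is supersolvable if there is a chain of modular flats
`F 0 ⊆ F 1 ⊆ ⋯ ⊆ F r` with `r (F i) = i` for each `i`. -/
def Supersolvable (M : Matroid α) : Prop :=
  ∃ F : ℕ → Set α, (∀ i ≤ M.mRk, M.IsModularFlat (F i) ∧ M.mRank (F i) = i) ∧
    ∀ i < M.mRk, F i ⊆ F (i + 1)

/-- A matroid is saturated if every round flat is modular. -/
def Saturated (M : Matroid α) : Prop :=
  ∀ F, M.IsFlat F → M.RoundSet F → M.IsModularFlat F

/-- A circuit: a minimal dependent subset of the ground set. -/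
def Circ (M : Matroid α) (C : Set α) : Prop :=
  C ⊆ M.E ∧ ¬ M.Indep C ∧ ∀ D ⊂ C, M.Indep D

/-- A matroid is connected if it is non-empty and every two distinct elements lie in a
common circuit. -/
def ConnectedM (M : Matroid α) : Prop :=
  M.E.Nonempty ∧ ∀ x ∈ M.E, ∀ y ∈ M.E, x = y ∨ ∃ C, M.Circ C ∧ x ∈ C ∧ y ∈ C

/-- A hyperplane: a flat of rank `r M - 1`. -/
def IsHyperplane (M : Matroid α) (H : Set α) : Prop :=
  M.IsFlat H ∧ M.mRank H + 1 = M.mRk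

/-- The union of the projections `P_H(x, y) = H ∩ cl (x ∪ y)` onto the modular hyperplane `H`,
taken over all pairs of distinct rank-one flats `x = cl {a}`, `y = cl {b}` spanned by
elements `a, b` of `X`. -/
def projUnion (M : Matroid α) (H X : Set α) : Set α :=
  ⋃ a ∈ X, ⋃ b ∈ X, ⋃ (_ : M.closure {a} ≠ M.closure {b}), H ∩ M.closure {a, b}

/-- Two elements are related if they are equal or lie in a common circuit; the connected
components of a matroid are the restrictions to the equivalence classes of this relation. -/
def connRel (M : Matroid α) (x y : α) : Prop :=
  x = y ∨ ∃ C, M.Circ C ∧ x ∈ C ∧ y ∈ C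

/-- The rotunda graph of a matroid: vertices are the rotunda; two rotunda are adjacent if
they intersect and there is a modular cover separating them at their intersection. -/
def rotundaGraph (M : Matroid α) : SimpleGraph {R : Set α // M.Rotunda R} where
  Adj R₁ R₂ := R₁ ≠ R₂ ∧ (R₁.1 ∩ R₂.1).Nonempty ∧
    ∃ F₁ F₂, M.ModularCover F₁ F₂ ∧ R₁.1 ⊆ F₁ ∧ R₂.1 ⊆ F₂ ∧ F₁ ∩ F₂ = R₁.1 ∩ R₂.1
  symm := by
    refine ⟨?_⟩
    rintro a b ⟨hne, hint, F₁, F₂, ⟨⟨hp1, hp2, hu⟩, hm1, hm2⟩, h1, h2, hi⟩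
    refine ⟨hne.symm, by rwa [Set.inter_comm], F₂, F₁,
      ⟨⟨hp2, hp1, by rwa [Set.union_comm]⟩, hm2, hm1⟩, h2, h1, ?_⟩
    rw [Set.inter_comm, hi, Set.inter_comm]
  loopless := ⟨fun a h => h.1 rfl⟩

/-- A rotunda tree of `M`: a tree on the rotunda of `M` such that for each element `x` of the
ground set, the rotunda containing `x` induce a (nonempty) subtree. -/
def IsRotundaTree (M : Matroid α) (T : SimpleGraph {R : Set α // M.Rotunda R}) : Prop :=
  T.IsTree ∧ ∀ x ∈ M.E, (T.induce {t : {R : Set α // M.Rotunda R} | x ∈ t.1}).Connected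

/-- A legitimate weighting of `M`: zero on the empty set, and strictly monotone under proper
inclusion on the set consisting of `∅` and the pairwise intersections of distinct rotunda. -/
def LegitimateWeighting (M : Matroid α) (σ : Set α → ℕ) : Prop :=
  σ ∅ = 0 ∧
  ∀ X X' : Set α,
    (X = ∅ ∨ ∃ R R', M.Rotunda R ∧ M.Rotunda R' ∧ R ≠ R' ∧ X = R ∩ R') →
    (X' = ∅ ∨ ∃ R R', M.Rotunda R ∧ M.Rotunda R' ∧ R ≠ R' ∧ X' = R ∩ R') →
    X ⊂ X' → σ X < σ X'

/-- The total weight of a graph on the rotunda of `M`, where the edge joining rotunda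
`R` and `R'` gets weight `σ (R ∩ R')`. -/
noncomputable def treeWeight {M : Matroid α} (σ : Set α → ℕ)
    (T : SimpleGraph {R : Set α // M.Rotunda R}) : ℕ :=
  ∑ᶠ e ∈ T.edgeSet,
    Sym2.lift ⟨fun a b => σ (a.1 ∩ b.1), fun a b => by simp [Set.inter_comm]⟩ e

/-- A tree-decomposition of a matroid: a tree together with bags covering the ground set. -/
def IsTreeDecomp (M : Matroid α) (T : SimpleGraph β) (τ : β → Set α) : Prop :=
  T.IsTree ∧ ∀ x ∈ M.E, ∃ t, x ∈ τ t

/-- The node-width of a node `t` in a tree-decomposition `(T, τ)` of `M`: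
`(Σ_i r (τ t ∪ ⋃_{k ≠ i} F_k)) − (d − 1) · r M`, where `F_1, …, F_d` are the unions of the
bags over the connected components of `T − t`. -/
noncomputable def nodeWidth (M : Matroid α) (T : SimpleGraph β) (τ : β → Set α) (t : β) : ℤ :=
  (∑ᶠ c : (T.induce {s : β | s ≠ t}).ConnectedComponent,
      (M.mRank (τ t ∪ ⋃ (s : {s : β // s ≠ t})
        (_ : (T.induce {s : β | s ≠ t}).connectedComponentMk s ≠ c), τ s.1) : ℤ))
    - ((Nat.card (T.induce {s : β | s ≠ t}).ConnectedComponent : ℤ) - 1) * (M.mRk : ℤ)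

/-- The width of a tree-decomposition: the maximum node-width. -/
noncomputable def decompWidth (M : Matroid α) (T : SimpleGraph β) (τ : β → Set α) : ℤ :=
  sSup (Set.range (M.nodeWidth T τ))

/-- The tree-width of a matroid: the minimum width of a (finite) tree-decomposition. -/
noncomputable def treeWidth (M : Matroid α) : ℕ :=
  sInf {n : ℕ | ∃ (β : Type) (T : SimpleGraph β) (τ : β → Set α),
    Finite β ∧ M.IsTreeDecomp T τ ∧ ∀ t, M.nodeWidth T τ t ≤ (n : ℤ)}

end Matroid

namespace SimpleGraph

/-- A graph is chordal if every cycle with at least four edges has a chord: an edge of the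
graph joining two vertices of the cycle that is not an edge of the cycle. -/
def IsChordal {V : Type*} (G : SimpleGraph V) : Prop :=
  ∀ ⦃v : V⦄ (w : G.Walk v v), w.IsCycle → 4 ≤ w.length →
    ∃ x y, x ∈ w.support ∧ y ∈ w.support ∧ G.Adj x y ∧ s(x, y) ∉ w.edges

/-- A maximal clique of a graph. -/
def MaxClique {V : Type*} (G : SimpleGraph V) (C : Set V) : Prop :=
  G.IsClique C ∧ ∀ D, G.IsClique D → C ⊆ D → D = C

/-- The reduced clique graph of a graph: vertices are the maximal cliques; two maximal
cliques are adjacent if they intersect and every walk from one side to the other passes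
through their intersection. -/
def reducedCliqueGraph {V : Type*} (G : SimpleGraph V) :
    SimpleGraph {C : Set V // G.MaxClique C} where
  Adj C₁ C₂ := C₁ ≠ C₂ ∧ (C₁.1 ∩ C₂.1).Nonempty ∧
    ∀ u ∈ C₁.1 \ C₂.1, ∀ v ∈ C₂.1 \ C₁.1, ∀ p : G.Walk u v,
      ∃ z ∈ p.support, z ∈ C₁.1 ∩ C₂.1
  symm := by
    refine ⟨?_⟩
    rintro a b ⟨hne, hint, hsep⟩
    refine ⟨hne.symm, by rwa [Set.inter_comm], fun u hu v hv p => ?_⟩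
    obtain ⟨z, hz, hz2⟩ := hsep v hv u hu p.reverse
    refine ⟨z, ?_, by rwa [Set.inter_comm]⟩
    simpa [SimpleGraph.Walk.support_reverse] using hz
  loopless := ⟨fun a h => h.1 rfl⟩

end SimpleGraph

open Matroid

/-! `H` and `cl (E - H)` are flats covering `E`, so every round set lies in one of them, and it
remains to see that `cl (E - H)` is round. Given a vertical cover `F₁ ∪ F₂` of `M | cl (E - H)`,
choose `a, b ∈ E - H` with `a ∉ F₁` and `b ∉ F₂`; then `{a, b}` is independent. Modularity of the
hyperplane `H` gives `r (H ∩ cl {a, b}) ≥ r (cl {a, b}) - 1 = 1`, so the line `cl {a, b}` meets `H`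
in a nonloop `c`. As `a, b ∉ H`, exchange gives `a ∈ cl {c, b}` and `b ∈ cl {c, a}`, so whichever of
`F₁`, `F₂` contains `c` also contains `a` or `b`, a contradiction. -/

namespace Matroid

variable {α : Type*} {M : Matroid α} {X Y I F F₁ F₂ H R : Set α} {a b c e : α}

lemma mRank_eq_eRk (M : Matroid α) [M.RankFinite] (X : Set α) : (M.mRank X : ℕ∞) = M.eRk X := by
  obtain ⟨I, hI⟩ := M.exists_isBasis' X
  have hIfin := hI.indep.finite
  have hmax : IsGreatest {n : ℕ | ∃ J, M.Indep J ∧ J ⊆ X ∧ J.ncard = n} I.ncard := by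
    refine ⟨⟨I, hI.indep, hI.subset, rfl⟩, ?_⟩
    rintro _ ⟨J, hJ, hJX, rfl⟩
    have h := hJ.encard_le_eRk_of_subset hJX
    rwa [← hI.encard_eq_eRk, ← hJ.finite.cast_ncard_eq, ← hIfin.cast_ncard_eq,
      Nat.cast_le] at h
  rw [mRank, hmax.csSup_eq, hIfin.cast_ncard_eq, hI.encard_eq_eRk]

lemma mRank_mono [M.RankFinite] (hXY : X ⊆ Y) : M.mRank X ≤ M.mRank Y := by
  have h := M.eRk_mono hXY
  rwa [← mRank_eq_eRk, ← mRank_eq_eRk, Nat.cast_le] at h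

lemma Indep.ncard_le_mRank [M.RankFinite] (hI : M.Indep I) (hIX : I ⊆ X) :
    I.ncard ≤ M.mRank X := by
  have h := hI.encard_le_eRk_of_subset hIX
  rwa [← hI.finite.cast_ncard_eq, ← mRank_eq_eRk, Nat.cast_le] at h

lemma exists_isNonloop_of_mRank_ne_zero (hX : M.mRank X ≠ 0) : ∃ e ∈ X, M.IsNonloop e := by
  obtain ⟨_, ⟨I, hI, hIX, rfl⟩, hI0⟩ :
      ∃ n ∈ {n : ℕ | ∃ J, M.Indep J ∧ J ⊆ X ∧ J.ncard = n}, n ≠ 0 := by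
    by_contra! h
    exact hX (Nat.eq_zero_of_le_zero (csSup_le ⟨0, ∅, M.empty_indep, empty_subset X, by simp⟩
      fun n hn => (h n hn).le))
  obtain ⟨e, he⟩ := nonempty_of_ncard_ne_zero hI0
  exact ⟨e, hIX he, indep_singleton.1 (hI.subset (singleton_subset_iff.2 he))⟩

lemma IsModularFlat.mRank_le_mRank_inter_add_one [M.RankFinite] (hmod : M.IsModularFlat H)
    (hH : M.IsHyperplane H) (hF : M.IsFlat F) : M.mRank F ≤ M.mRank (H ∩ F) + 1 := by
  have hunion : M.mRank (H ∪ F) ≤ M.mRk :=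
    mRank_mono (union_subset hH.1.subset_ground hF.subset_ground)
  have hmodF := hmod.2 F hF
  have hrkH := hH.2
  omega

lemma IsModularFlat.exists_isNonloop_mem_closure_pair [M.RankFinite] (hmod : M.IsModularFlat H)
    (hH : M.IsHyperplane H) (hab : M.Indep {a, b}) (hne : a ≠ b) :
    ∃ c ∈ H ∩ M.closure {a, b}, M.IsNonloop c := by
  refine exists_isNonloop_of_mRank_ne_zero ?_
  have h2 : ({a, b} : Set α).ncard ≤ M.mRank (M.closure {a, b}) :=
    hab.ncard_le_mRank (M.subset_closure _ hab.subset_ground)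
  have := hmod.mRank_le_mRank_inter_add_one hH (M.isFlat_closure {a, b})
  rw [ncard_pair hne] at h2
  omega

lemma IsFlat.mem_closure_of_mem_closure_pair (hH : M.IsFlat H) (hc : M.IsNonloop c) (hcH : c ∈ H)
    (hbH : b ∉ H) (hcab : c ∈ M.closure {a, b}) : a ∈ M.closure {c, b} := by
  have hcb : c ∉ M.closure {b} := fun h =>
    hbH (hH.closure ▸ M.closure_subset_closure (singleton_subset_iff.2 hcH)
      (hc.mem_closure_singleton h))
  exact (M.closure_exchange ⟨hcab, hcb⟩).1

lemma IsFlat.mem_of_mem_closure_of_restrict (hF : (M ↾ R).IsFlat F) (hXF : X ⊆ F)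
    (heR : e ∈ R) (he : e ∈ M.closure X) : e ∈ F := by
  have hXR : X ⊆ R := hXF.trans hF.subset_ground
  refine hF.closure ▸ (M ↾ R).closure_subset_closure hXF ?_
  rw [restrict_closure_eq', inter_eq_left.2 hXR]
  exact Or.inl ⟨he, heR⟩

lemma IsFlat.inter_restrict (hF : M.IsFlat F) (hR : R ⊆ M.E) : (M ↾ R).IsFlat (F ∩ R) := by
  rw [isFlat_iff_closure_eq, restrict_closure_eq _ inter_subset_right hR]
  refine subset_antisymm (inter_subset_inter_left _ ?_)
    (subset_inter (M.subset_closure _ (inter_subset_right.trans hR)) inter_subset_right)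
  exact (M.closure_subset_closure inter_subset_left).trans hF.closure.subset

lemma RoundSet.subset_or_subset (hR : M.RoundSet R) (hF₁ : M.IsFlat F₁) (hF₂ : M.IsFlat F₂)
    (hcover : R ⊆ F₁ ∪ F₂) : R ⊆ F₁ ∨ R ⊆ F₂ := by
  by_contra! h
  refine hR.2 (F₁ ∩ R) (F₂ ∩ R)
    ⟨⟨hF₁.inter_restrict hR.1, ?_⟩, ⟨hF₂.inter_restrict hR.1, ?_⟩, ?_⟩
  · exact fun h₁ => h.1 (inter_eq_right.1 h₁)
  · exact fun h₂ => h.2 (inter_eq_right.1 h₂)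
  · rw [restrict_ground_eq, ← union_inter_distrib_right, inter_eq_right.2 hcover]

lemma IsModularFlat.roundSet_closure_compl [M.RankFinite] (hmod : M.IsModularFlat H)
    (hH : M.IsHyperplane H) : M.RoundSet (M.closure (M.E \ H)) := by
  set K := M.closure (M.E \ H)
  have hCK : M.E \ H ⊆ K := M.subset_closure _ sdiff_subset
  refine ⟨M.closure_subset_ground _, ?_⟩
  rintro F₁ F₂ ⟨⟨hF₁, hF₁K⟩, ⟨hF₂, hF₂K⟩, hcover⟩
  have hKcover : K ⊆ F₁ ∪ F₂ := hcover.symm.subset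
  have hmiss : ∀ {F}, (M ↾ K).IsFlat F → F ≠ (M ↾ K).E → ∃ x ∈ M.E \ H, x ∉ F := by
    intro F hF hFK
    by_contra! h
    exact hFK (hF.subset_ground.antisymm fun x hx => hF.mem_of_mem_closure_of_restrict h hx hx)
  obtain ⟨a, haC, haF₁⟩ := hmiss hF₁ hF₁K
  obtain ⟨b, hbC, hbF₂⟩ := hmiss hF₂ hF₂K
  have haF₂ : a ∈ F₂ := (hKcover (hCK haC)).resolve_left haF₁
  have hbF₁ : b ∈ F₁ := (hKcover (hCK hbC)).resolve_right hbF₂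
  have hb : M.IsNonloop b :=
    isNonloop_of_notMem_closure (X := H) (by rw [hH.1.closure]; exact hbC.2) hbC.1
  have hab : a ∉ M.closure {b} := fun h =>
    haF₁ (hF₁.mem_of_mem_closure_of_restrict (singleton_subset_iff.2 hbF₁) (hCK haC) h)
  have hne : a ≠ b := by rintro rfl; exact haF₁ hbF₁
  have hIab : M.Indep {a, b} := (indep_singleton.2 hb).insert_indep_iff.2 (Or.inl ⟨haC.1, hab⟩)
  obtain ⟨c, ⟨hcH, hcab⟩, hc⟩ := hmod.exists_isNonloop_mem_closure_pair hH hIab hne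
  have hcK : c ∈ K :=
    M.closure_subset_closure_of_subset_closure (pair_subset (hCK haC) (hCK hbC)) hcab
  rcases hKcover hcK with hcF₁ | hcF₂
  · exact haF₁ (hF₁.mem_of_mem_closure_of_restrict (pair_subset hcF₁ hbF₁) (hCK haC)
      (hH.1.mem_closure_of_mem_closure_pair hc hcH hbC.2 hcab))
  · rw [pair_comm] at hcab
    exact hbF₂ (hF₂.mem_of_mem_closure_of_restrict (pair_subset hcF₂ haF₂) (hCK hbC)
      (hH.1.mem_closure_of_mem_closure_pair hc hcH haC.2 hcab))

lemma IsHyperplane.nonempty_diff (hH : M.IsHyperplane H) : (M.E \ H).Nonempty := by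
  rw [nonempty_iff_ne_empty, Ne, sdiff_eq_empty]
  intro hEH
  have h := hH.2
  rw [mRk, hH.1.subset_ground.antisymm hEH] at h
  omega

end Matroid

/-- Let `H` be a modular hyperplane of `M` with complementary cocircuit `C* = E(M) − H`.
Then `cl C*` is a rotunda of `M`, and every other rotunda of `M` is contained in `H`. -/
theorem closure_cocircuit_rotunda {α : Type*} (M : Matroid α) [M.Finite]
    (H : Set α) (hH : M.IsHyperplane H) (hmod : M.IsModularFlat H) :
    M.Rotunda (M.closure (M.E \ H)) ∧
    ∀ R, M.Rotunda R → R ≠ M.closure (M.E \ H) → R ⊆ H := by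
  set K := M.closure (M.E \ H)
  have hK : M.RoundSet K := hmod.roundSet_closure_compl hH
  have hdichotomy : ∀ R, M.RoundSet R → R ⊆ H ∨ R ⊆ K := fun R hR =>
    hR.subset_or_subset hH.1 (M.isFlat_closure _) fun x hx =>
      (em (x ∈ H)).imp_right fun hxH => M.subset_closure _ sdiff_subset ⟨hR.1 hx, hxH⟩
  obtain ⟨e, he⟩ := hH.nonempty_diff
  refine ⟨⟨M.isFlat_closure _, hK, fun R _ hR hKR => ?_⟩, fun R hR hRK => ?_⟩
  · rcases hdichotomy R hR with hRH | hRK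
    · exact absurd (hRH (hKR (M.subset_closure _ sdiff_subset he))) he.2
    · exact hRK.antisymm hKR
  · exact (hdichotomy R hR.2.1).resolve_right fun hRK' =>
      hRK (hR.2.2 K (M.isFlat_closure _) hK hRK').symm
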